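/- Fix positive integers T, t and x ∈ ℝ^{Tt}. For every k ∈ {1, …, Tt}: if z̃_k ∉ [31/32, 33/32] and Dominate(k) does not hold, then |z̃_{k−1}| ≥ (4/3)|z̃_k| or |z̃_{k+1}| ≥ (4/3)|z̃_k|. -/

import Mathlib

/-!
Outside `[31y/32, 33y/32]` the scalar part `v_y` has derivative `v_y'(x) = x`. Writing
`x_j = z̃_j y_j` and using `y_{j+1} = a_j y_j`, where `a_j ∈ {7/8, 1}` is the coefficient of the
chain difference `x_{j+1} - a_j x_j` in `q`, the `k`-th partial derivative of `g` becomes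
`y_k ((2 + A) z̃_k - z̃_{k-1} - A z̃_{k+1})` with `A = a_k² ∈ [0, 1]` (and `A = 0` for `k = Tt`).
If both neighbours satisfy `|z̃_{k±1}| < (4/3)|z̃_k|`, the triangle inequality makes its absolute
value exceed `(2 + A - 4/3 - 4A/3) y_k |z̃_k| ≥ |x_k| / 3`, so `Dominate(k)` would hold.
-/

/-- The `k`-th coordinate (1-indexed) of `x ∈ ℝ^d`, with out-of-range coordinates
(including the convention `x_0 = 0`) equal to `0`. -/
noncomputable def coord {d : ℕ} (x : EuclideanSpace ℝ (Fin d)) (k : ℕ) : ℝ :=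
  if h : 1 ≤ k ∧ k ≤ d then x ⟨k - 1, by omega⟩ else 0

/-- The piecewise scalar component `v_y` of the hard instance. -/
noncomputable def vFun (y x : ℝ) : ℝ :=
  if x ≤ 31 / 32 * y then x ^ 2 / 2
  else if x ≤ y then x ^ 2 / 2 - 16 * (x - 31 / 32 * y) ^ 2
  else if x ≤ 33 / 32 * y then x ^ 2 / 2 - y ^ 2 / 32 + 16 * (x - 33 / 32 * y) ^ 2
  else x ^ 2 / 2 - y ^ 2 / 32

/-- The quadratic (convex) part `q_{T,t}` of the hard instance, with the convention
`x_0 = 0` (encoded by `coord x 0 = 0`). -/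
noncomputable def qFun (T t : ℕ) (x : EuclideanSpace ℝ (Fin (T * t))) : ℝ :=
  (1 / 2) * ∑ i ∈ Finset.range t,
    ((7 / 8 * coord x (i * T) - coord x (i * T + 1)) ^ 2
      + ∑ j ∈ Finset.Icc 1 (T - 1), (coord x (i * T + j + 1) - coord x (i * T + j)) ^ 2)

/-- The reference vector `y ∈ ℝ^{Tt}` with `y_{qT+b} = (7/8)^q` for `b ∈ {1, …, T}`;
in 0-based indexing, `y i = (7/8)^(i / T)`. -/
noncomputable def yVec (T t : ℕ) : EuclideanSpace ℝ (Fin (T * t)) :=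
  WithLp.toLp 2 (fun i => (7 / 8 : ℝ) ^ ((i : ℕ) / T))

/-- The hard instance `g_{T,t}(x) = q_{T,t}(x) + Σ_{i=1}^{Tt} v_{y_i}(x_i)`. -/
noncomputable def gFun (T t : ℕ) (x : EuclideanSpace ℝ (Fin (T * t))) : ℝ :=
  qFun T t x + ∑ i : Fin (T * t), vFun (yVec T t i) (x i)

/-- Extended coordinates: `x̃_0 = 0`, `x̃_i = x_i` for `1 ≤ i ≤ Tt`, `x̃_{Tt+1} = x_{Tt}`. -/
noncomputable def xTilde (T t : ℕ) (x : EuclideanSpace ℝ (Fin (T * t))) (k : ℕ) : ℝ :=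
  if k ≤ T * t then coord x k else coord x (T * t)

/-- Extended reference coordinates: `ỹ_0 = 1`, `ỹ_i = y_i` for `1 ≤ i ≤ Tt`,
`ỹ_{Tt+1} = y_{Tt}`. -/
noncomputable def yTilde (T t : ℕ) (k : ℕ) : ℝ :=
  if k = 0 then 1
  else if k ≤ T * t then coord (yVec T t) k
  else coord (yVec T t) (T * t)

/-- The ratios `z̃_k = x̃_k / ỹ_k`. -/
noncomputable def zTilde (T t : ℕ) (x : EuclideanSpace ℝ (Fin (T * t))) (k : ℕ) : ℝ :=
  xTilde T t x k / yTilde T t k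

/-- `Dominate k` holds iff `x_k = 0` or `|(∇g_{T,t}(x))_k| > 0.19·|x_k|`. -/
def Dominate (T t : ℕ) (x : EuclideanSpace ℝ (Fin (T * t))) (k : ℕ) : Prop :=
  coord x k = 0 ∨ |coord (gradient (gFun T t) x) k| > 0.19 * |coord x k|

open Set

lemma hasDerivAt_sq_max_zero (u : ℝ) :
    HasDerivAt (fun v : ℝ => max v 0 ^ 2) (2 * max u 0) u := by
  rcases lt_trichotomy u 0 with hu | rfl | hu
  · rw [max_eq_right hu.le, mul_zero]
    refine (hasDerivAt_const u (0 : ℝ)).congr_of_eventuallyEq ?_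
    filter_upwards [Iio_mem_nhds hu] with v hv
    rw [max_eq_right (le_of_lt hv), zero_pow two_ne_zero]
  · have hleft : HasDerivWithinAt (fun v : ℝ => max v 0 ^ 2) 0 (Iic 0) 0 :=
      (hasDerivWithinAt_const 0 _ 0).congr (fun v hv => by simp [max_eq_right (mem_Iic.1 hv)])
        (by simp)
    have hright : HasDerivWithinAt (fun v : ℝ => max v 0 ^ 2) 0 (Ici 0) 0 := by
      refine ((hasDerivAt_pow 2 (0 : ℝ)).hasDerivWithinAt.congr
        (fun v hv => by simp [max_eq_left (mem_Ici.1 hv)]) (by simp)).congr_deriv ?_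
      simp
    simpa [Iic_union_Ici] using hleft.union hright
  · rw [max_eq_left hu.le]
    refine ((hasDerivAt_pow 2 u).congr_of_eventuallyEq ?_).congr_deriv (by ring)
    filter_upwards [Ioi_mem_nhds hu] with v hv
    rw [max_eq_left (le_of_lt hv)]

-- `v_y - x²/2` is a C¹ quadratic spline with knots `31y/32`, `y`, `33y/32`.
lemma vFun_eq_sq_max_zero {y : ℝ} (hy : 0 ≤ y) (x : ℝ) :
    vFun y x = x ^ 2 / 2 - 16 * max (x - 31 / 32 * y) 0 ^ 2 + 32 * max (x - y) 0 ^ 2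
      - 16 * max (x - 33 / 32 * y) 0 ^ 2 := by
  simp only [vFun, max_def]
  split_ifs <;> first | (exfalso; linarith) | ring

noncomputable def vDeriv (y x : ℝ) : ℝ :=
  x - 32 * max (x - 31 / 32 * y) 0 + 64 * max (x - y) 0 - 32 * max (x - 33 / 32 * y) 0

lemma hasDerivAt_vFun {y : ℝ} (hy : 0 ≤ y) (x : ℝ) : HasDerivAt (vFun y) (vDeriv y x) x := by
  have hsq (c : ℝ) : HasDerivAt (fun v : ℝ => max (v - c) 0 ^ 2) (2 * max (x - c) 0) x := by
    exact ((hasDerivAt_sq_max_zero (x - c)).comp x ((hasDerivAt_id x).sub_const c)).congr_deriv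
      (mul_one _)
  have h := ((((hasDerivAt_pow 2 x).div_const 2).fun_sub ((hsq (31 / 32 * y)).const_mul 16)).fun_add
    ((hsq y).const_mul 32)).fun_sub ((hsq (33 / 32 * y)).const_mul 16)
  rw [funext (vFun_eq_sq_max_zero hy)]
  refine h.congr_deriv ?_
  simp only [vDeriv]
  ring

lemma vDeriv_eq_self {y x : ℝ} (hy : 0 ≤ y) (hx : x ≤ 31 / 32 * y ∨ 33 / 32 * y ≤ x) :
    vDeriv y x = x := by
  simp only [vDeriv, max_def]
  split_ifs <;> rcases hx with hx | hx <;> linarith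

noncomputable def chainCoeff (T n : ℕ) : ℝ := if T ∣ n then 7 / 8 else 1

lemma chainCoeff_pos (T n : ℕ) : 0 < chainCoeff T n := by
  unfold chainCoeff; split_ifs <;> norm_num

lemma chainCoeff_le_one (T n : ℕ) : chainCoeff T n ≤ 1 := by
  unfold chainCoeff; split_ifs <;> norm_num

lemma Finset.sum_range_mul_eq_sum_sum {M : Type*} [AddCommMonoid M] (f : ℕ → M) (T t : ℕ) :
    ∑ n ∈ Finset.range (T * t), f n =
      ∑ i ∈ Finset.range t, ∑ j ∈ Finset.range T, f (i * T + j) := by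
  induction t with
  | zero => simp
  | succ t ih => rw [Finset.sum_range_succ, ← ih, Nat.mul_succ, Finset.sum_range_add, Nat.mul_comm]

lemma qFun_eq_sum_chain (T t : ℕ) (hT : 0 < T) (x : EuclideanSpace ℝ (Fin (T * t))) :
    qFun T t x = 1 / 2 * ∑ n ∈ Finset.range (T * t),
      (coord x (n + 1) - chainCoeff T n * coord x n) ^ 2 := by
  rw [qFun, Finset.sum_range_mul_eq_sum_sum]
  congr 1
  refine Finset.sum_congr rfl fun i _ => ?_
  have hIcc : Finset.Icc 1 (T - 1) = Finset.Ico 1 T := by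
    ext j
    simp only [Finset.mem_Icc, Finset.mem_Ico]
    omega
  rw [Finset.range_eq_Ico, Finset.sum_eq_sum_Ico_succ_bot hT, hIcc]
  congr 1
  · rw [add_zero, chainCoeff, if_pos (dvd_mul_left T i)]
    ring
  · refine Finset.sum_congr rfl fun j hj => ?_
    have hj := Finset.mem_Ico.1 hj
    have hndvd : ¬ T ∣ i * T + j := fun h =>
      Nat.not_dvd_of_pos_of_lt hj.1 hj.2 ((Nat.dvd_add_right (dvd_mul_left T i)).1 h)
    rw [chainCoeff, if_neg hndvd, one_mul]

lemma pow_div_eq_chainCoeff_mul (T : ℕ) {n : ℕ} (hn : 1 ≤ n) :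
    (7 / 8 : ℝ) ^ (n / T) = chainCoeff T n * (7 / 8 : ℝ) ^ ((n - 1) / T) := by
  obtain ⟨n, rfl⟩ := Nat.exists_eq_add_of_le' hn
  rw [Nat.succ_div, Nat.add_sub_cancel, pow_add, chainCoeff]
  split_ifs <;> ring

noncomputable def coordCLM (d j : ℕ) : EuclideanSpace ℝ (Fin d) →L[ℝ] ℝ :=
  if h : 1 ≤ j ∧ j ≤ d then EuclideanSpace.proj (⟨j - 1, by omega⟩ : Fin d) else 0

lemma coordCLM_apply {d : ℕ} (j : ℕ) (x : EuclideanSpace ℝ (Fin d)) :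
    coordCLM d j x = coord x j := by
  unfold coordCLM coord
  split_ifs <;> rfl

lemma coord_succ {d : ℕ} (x : EuclideanSpace ℝ (Fin d)) (m : Fin d) :
    coord x (m + 1) = x m := by
  rw [coord, dif_pos ⟨by omega, m.2⟩]
  rfl

lemma coord_single {d : ℕ} (m : Fin d) (j : ℕ) :
    coord (EuclideanSpace.single m (1 : ℝ)) j = if j = m + 1 then 1 else 0 := by
  by_cases hj : 1 ≤ j ∧ j ≤ d
  · rw [coord, dif_pos hj, PiLp.single_apply]
    exact if_congr (by rw [Fin.ext_iff]; exact (show j - 1 = (m : ℕ) ↔ j = m + 1 by omega))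
      rfl rfl
  · rw [coord, dif_neg hj, if_neg (by omega)]

lemma hasFDerivAt_half_sum_sq {ι E : Type*} [NormedAddCommGroup E] [NormedSpace ℝ E]
    (s : Finset ι) (ℓ : ι → E →L[ℝ] ℝ) (x : E) :
    HasFDerivAt (fun x => 1 / 2 * ∑ n ∈ s, ℓ n x ^ 2) (∑ n ∈ s, ℓ n x • ℓ n) x := by
  have h := (HasFDerivAt.fun_sum fun n (_ : n ∈ s) =>
    ((ℓ n).hasFDerivAt (x := x)).pow 2).const_mul (1 / 2 : ℝ)
  refine h.congr_fderiv ?_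
  rw [Finset.smul_sum]
  refine Finset.sum_congr rfl fun n _ => ?_
  rw [smul_smul]
  congr 1
  ring

lemma gradient_apply_of_hasFDerivAt {ι : Type*} [Fintype ι] [DecidableEq ι]
    {f : EuclideanSpace ℝ ι → ℝ} {L : EuclideanSpace ℝ ι →L[ℝ] ℝ} {x : EuclideanSpace ℝ ι}
    (hf : HasFDerivAt f L x) (i : ι) : gradient f x i = L (EuclideanSpace.single i 1) := by
  rw [gradient, hf.fderiv, ← InnerProductSpace.toDual_symm_apply,
    EuclideanSpace.inner_single_right]
  simp

noncomputable def chainCLM (T d n : ℕ) : EuclideanSpace ℝ (Fin d) →L[ℝ] ℝ :=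
  coordCLM d (n + 1) - chainCoeff T n • coordCLM d n

lemma chainCLM_apply (T n : ℕ) {d : ℕ} (x : EuclideanSpace ℝ (Fin d)) :
    chainCLM T d n x = coord x (n + 1) - chainCoeff T n * coord x n := by
  simp [chainCLM, coordCLM_apply]

lemma yVec_apply (T t : ℕ) (i : Fin (T * t)) : yVec T t i = (7 / 8 : ℝ) ^ ((i : ℕ) / T) := rfl

lemma yVec_nonneg (T t : ℕ) (i : Fin (T * t)) : 0 ≤ yVec T t i := by
  rw [yVec_apply]; positivity

lemma hasFDerivAt_gFun (T t : ℕ) (hT : 0 < T) (x : EuclideanSpace ℝ (Fin (T * t))) :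
    HasFDerivAt (gFun T t)
      (∑ n ∈ Finset.range (T * t), chainCLM T (T * t) n x • chainCLM T (T * t) n
        + ∑ i, vDeriv (yVec T t i) (x i) • EuclideanSpace.proj i) x := by
  have hq : qFun T t =
      fun x => 1 / 2 * ∑ n ∈ Finset.range (T * t), chainCLM T (T * t) n x ^ 2 := by
    ext x
    simp only [qFun_eq_sum_chain T t hT, chainCLM_apply]
  have hv (i : Fin (T * t)) : HasFDerivAt (fun x : EuclideanSpace ℝ (Fin (T * t)) =>
      vFun (yVec T t i) (x i)) (vDeriv (yVec T t i) (x i) • EuclideanSpace.proj (𝕜 := ℝ) i) x := by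
    have h := hasDerivAt_vFun (yVec_nonneg T t i) (x i)
    exact h.comp_hasFDerivAt x (EuclideanSpace.proj (𝕜 := ℝ) i).hasFDerivAt
  have h := (hasFDerivAt_half_sum_sq (Finset.range (T * t)) (chainCLM T (T * t)) x).add
    (HasFDerivAt.fun_sum (u := Finset.univ) fun i _ => hv i)
  rwa [← hq] at h

lemma coord_gradient_gFun (T t : ℕ) (hT : 0 < T) (x : EuclideanSpace ℝ (Fin (T * t))) {k : ℕ}
    (hk1 : 1 ≤ k) (hk2 : k ≤ T * t) :
    coord (gradient (gFun T t) x) k = (coord x k - chainCoeff T (k - 1) * coord x (k - 1))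
      - (if k < T * t then chainCoeff T k * (coord x (k + 1) - chainCoeff T k * coord x k) else 0)
      + vDeriv (coord (yVec T t) k) (coord x k) := by
  obtain ⟨m, rfl⟩ : ∃ m : Fin (T * t), k = m + 1 :=
    ⟨⟨k - 1, by omega⟩, (Nat.sub_add_cancel hk1).symm⟩
  rw [coord_succ (gradient _ x), coord_succ (yVec T t),
    gradient_apply_of_hasFDerivAt (hasFDerivAt_gFun T t hT x)]
  simp only [add_apply, sum_apply, smul_apply, smul_eq_mul, chainCLM_apply, coord_single,
    PiLp.proj_apply, PiLp.single_apply, Nat.add_right_cancel_iff, mul_ite, mul_one, mul_zero,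
    mul_sub, Finset.sum_sub_distrib, Finset.sum_ite_eq', Finset.mem_range, Finset.mem_univ,
    Fin.is_lt, if_true, add_tsub_cancel_right, ← coord_succ x]
  split_ifs <;> ring

section Rescaling

variable {T t : ℕ} (x : EuclideanSpace ℝ (Fin (T * t))) {k : ℕ}

lemma coord_yVec (hk1 : 1 ≤ k) (hk2 : k ≤ T * t) :
    coord (yVec T t) k = (7 / 8 : ℝ) ^ ((k - 1) / T) := by
  rw [coord, dif_pos ⟨hk1, hk2⟩, yVec_apply]

lemma yTilde_eq_pow (hk1 : 1 ≤ k) (hk2 : k ≤ T * t) :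
    yTilde T t k = (7 / 8 : ℝ) ^ ((k - 1) / T) := by
  rw [yTilde, if_neg (by omega), if_pos hk2, coord_yVec hk1 hk2]

lemma coord_eq_zTilde_mul (hk1 : 1 ≤ k) (hk2 : k ≤ T * t) :
    coord x k = zTilde T t x k * (7 / 8 : ℝ) ^ ((k - 1) / T) := by
  rw [zTilde, xTilde, if_pos hk2, yTilde_eq_pow hk1 hk2, div_mul_cancel₀]
  positivity

lemma chainCoeff_mul_coord_pred (hk1 : 1 ≤ k) (hk2 : k ≤ T * t) :
    chainCoeff T (k - 1) * coord x (k - 1) =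
      zTilde T t x (k - 1) * (7 / 8 : ℝ) ^ ((k - 1) / T) := by
  rcases Nat.lt_or_ge k 2 with hk | hk
  · obtain rfl : k = 1 := by omega
    simp [coord, zTilde, xTilde]
  · rw [coord_eq_zTilde_mul x (k := k - 1) (by omega) (by omega),
      pow_div_eq_chainCoeff_mul T (n := k - 1) (by omega)]
    ring

lemma coord_succ_eq_chainCoeff_mul (hk1 : 1 ≤ k) (hk : k < T * t) :
    coord x (k + 1) = chainCoeff T k * zTilde T t x (k + 1) * (7 / 8 : ℝ) ^ ((k - 1) / T) := by
  rw [coord_eq_zTilde_mul x (k := k + 1) (by omega) hk, Nat.add_sub_cancel,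
    pow_div_eq_chainCoeff_mul T hk1]
  ring

end Rescaling

lemma lt_abs_weighted_second_diff {A a b c : ℝ} (hA0 : 0 ≤ A) (hA1 : A ≤ 1)
    (ha : |a| < 4 / 3 * |b|) (hc : |c| < 4 / 3 * |b|) :
    0.19 * |b| < |(2 + A) * b - a - A * c| := by
  have hsplit : (2 + A) * |b| ≤ |(2 + A) * b - a - A * c| + |a| + A * |c| := by
    calc (2 + A) * |b| = |((2 + A) * b - a - A * c) + a + A * c| := by
          rw [show (2 + A) * b - a - A * c + a + A * c = (2 + A) * b by ring, abs_mul,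
            abs_of_nonneg (show (0 : ℝ) ≤ 2 + A by linarith)]
      _ ≤ |(2 + A) * b - a - A * c| + |a| + |A * c| := abs_add_three _ _ _
      _ = |(2 + A) * b - a - A * c| + |a| + A * |c| := by rw [abs_mul, abs_of_nonneg hA0]
  nlinarith [mul_le_mul_of_nonneg_left hc.le hA0, abs_nonneg b]

lemma exists_coord_gradient_gFun_eq_zTilde (T t : ℕ) (hT : 0 < T)
    (x : EuclideanSpace ℝ (Fin (T * t))) {k : ℕ} (hk1 : 1 ≤ k) (hk2 : k ≤ T * t)
    (hz : zTilde T t x k ∉ Icc (31 / 32 : ℝ) (33 / 32)) :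
    ∃ A : ℝ, 0 ≤ A ∧ A ≤ 1 ∧ coord (gradient (gFun T t) x) k = (7 / 8 : ℝ) ^ ((k - 1) / T) *
      ((2 + A) * zTilde T t x k - zTilde T t x (k - 1) - A * zTilde T t x (k + 1)) := by
  set Y : ℝ := (7 / 8 : ℝ) ^ ((k - 1) / T)
  have hY : 0 < Y := by positivity
  have hxk : coord x k = zTilde T t x k * Y := coord_eq_zTilde_mul x hk1 hk2
  have hvDeriv : vDeriv (coord (yVec T t) k) (coord x k) = coord x k := by
    rw [coord_yVec hk1 hk2]
    refine vDeriv_eq_self hY.le ?_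
    rw [mem_Icc, not_and_or, not_le, not_le] at hz
    rw [hxk]
    rcases hz with hz | hz
    · exact Or.inl (by nlinarith)
    · exact Or.inr (by nlinarith)
  rw [coord_gradient_gFun T t hT x hk1 hk2, hvDeriv, chainCoeff_mul_coord_pred x hk1 hk2, hxk]
  split_ifs with hk
  · refine ⟨chainCoeff T k ^ 2, sq_nonneg _,
      pow_le_one₀ (chainCoeff_pos T k).le (chainCoeff_le_one T k), ?_⟩
    rw [coord_succ_eq_chainCoeff_mul x hk1 hk]
    ring
  · exact ⟨0, le_rfl, zero_le_one, by ring⟩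

theorem not_dominate_neighbor_growth_general (T t : ℕ)
    (x : EuclideanSpace ℝ (Fin (T * t))) (k : ℕ) (hk1 : 1 ≤ k) (hk2 : k ≤ T * t)
    (hz : zTilde T t x k ∉ Set.Icc (31 / 32 : ℝ) (33 / 32))
    (hnd : ¬ Dominate T t x k) :
    |zTilde T t x (k - 1)| ≥ 4 / 3 * |zTilde T t x k| ∨
    |zTilde T t x (k + 1)| ≥ 4 / 3 * |zTilde T t x k| := by
  have hT : 0 < T := Nat.pos_of_mul_pos_right (by omega : 0 < T * t)
  obtain ⟨A, hA0, hA1, hgrad⟩ := exists_coord_gradient_gFun_eq_zTilde T t hT x hk1 hk2 hz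
  by_contra! hgrowth
  refine hnd (Or.inr ?_)
  have hY : (0 : ℝ) < (7 / 8) ^ ((k - 1) / T) := by positivity
  have key := mul_lt_mul_of_pos_left (lt_abs_weighted_second_diff hA0 hA1 hgrowth.1 hgrowth.2) hY
  rw [hgrad, coord_eq_zTilde_mul x hk1 hk2, abs_mul, abs_mul, abs_of_pos hY]
  linarith

/-- For `k ∈ {1, …, Tt}`: if `z̃_k ∉ [31/32, 33/32]` and `Dominate k`
fails, then `|z̃_{k-1}| ≥ (4/3)|z̃_k|` or `|z̃_{k+1}| ≥ (4/3)|z̃_k|`. -/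
theorem not_dominate_neighbor_growth (T t : ℕ) (hT : 0 < T) (ht : 0 < t)
    (x : EuclideanSpace ℝ (Fin (T * t))) (k : ℕ) (hk1 : 1 ≤ k) (hk2 : k ≤ T * t)
    (hz : zTilde T t x k ∉ Set.Icc (31 / 32 : ℝ) (33 / 32))
    (hnd : ¬ Dominate T t x k) :
    |zTilde T t x (k - 1)| ≥ 4 / 3 * |zTilde T t x k| ∨
    |zTilde T t x (k + 1)| ≥ 4 / 3 * |zTilde T t x k| :=
  not_dominate_neighbor_growth_general T t x k hk1 hk2 hz hnd
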